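/- Let P, Q, R be polynomials in ℚ[x₁, x₂] satisfying the three relations x₂²·Q + x₁x₂·P = 0, x₁²·P − x₂²·R = 0, and x₁²·Q + x₁x₂·R = 0. Then there exists a polynomial Z ∈ ℚ[x₁, x₂] such that P = x₂²·Z, Q = −x₁x₂·Z, and R = x₁²·Z. (This is the syzygy computation from the proof of Theorem D, case p = 3, n = 2: since x₁² and x₂² are relatively prime in ℚ[x₁,x₂], any solution (P,Q,R) of this linear system is a multiple of (x₂², −x₁x₂, x₁²), which shows the element α = P y₁y₂ + Q y₁y₃ + R y₂y₃ is the coboundary d(Z y₁y₂y₃).) -/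

import Mathlib

open MvPolynomial

/-- If `P, Q, R ∈ ℚ[x₁,x₂]` satisfy `x₂²Q + x₁x₂P = 0`,
`x₁²P − x₂²R = 0` and `x₁²Q + x₁x₂R = 0`, then there is `Z ∈ ℚ[x₁,x₂]`
with `P = x₂²Z`, `Q = −x₁x₂Z`, `R = x₁²Z`. -/
theorem stmt_8 (P Q R : MvPolynomial (Fin 2) ℚ)
    (h1 : (X 1) ^ 2 * Q + (X 0) * (X 1) * P = 0)
    (h2 : (X 0) ^ 2 * P - (X 1) ^ 2 * R = 0)
    (h3 : (X 0) ^ 2 * Q + (X 0) * (X 1) * R = 0) :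
    ∃ Z : MvPolynomial (Fin 2) ℚ,
      P = (X 1) ^ 2 * Z ∧ Q = -((X 0) * (X 1)) * Z ∧ R = (X 0) ^ 2 * Z := by
  have hX1 : Prime (X 1 : MvPolynomial (Fin 2) ℚ) := by
    have h0 : Prime (X 0 : MvPolynomial (Fin 2) ℚ) := by
      rw [← MulEquiv.prime_iff (finSuccEquiv ℚ 1).toMulEquiv]
      show Prime (finSuccEquiv ℚ 1 (X 0))
      rw [finSuccEquiv_X_zero]
      exact Polynomial.prime_X
    rw [show (X 1 : MvPolynomial (Fin 2) ℚ) = renameEquiv ℚ (Equiv.swap (0:Fin 2) 1) (X 0) by simp]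
    exact (MulEquiv.prime_iff (renameEquiv ℚ (Equiv.swap (0:Fin 2) 1)).toMulEquiv).mpr h0
  have hX1ne : (X 1 : MvPolynomial (Fin 2) ℚ) ≠ 0 := hX1.ne_zero
  have hsqne : (X 1 : MvPolynomial (Fin 2) ℚ) ^ 2 ≠ 0 := pow_ne_zero _ hX1ne
  have hnd : ¬ (X 1 : MvPolynomial (Fin 2) ℚ) ∣ (X 0) ^ 2 := by
    intro h
    have h' := map_dvd (aeval (fun i : Fin 2 => if i = 0 then (1:ℚ) else 0)) h
    simp at h'
  have h2' : (X 0 : MvPolynomial (Fin 2) ℚ) ^ 2 * P = (X 1) ^ 2 * R := by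
    linear_combination h2
  have hd2 : (X 1 : MvPolynomial (Fin 2) ℚ) ^ 2 ∣ (X 0) ^ 2 * P := ⟨R, h2'⟩
  have hd1 : (X 1 : MvPolynomial (Fin 2) ℚ) ∣ (X 0) ^ 2 * P :=
    dvd_trans (dvd_pow_self _ two_ne_zero) hd2
  have hP1 : (X 1 : MvPolynomial (Fin 2) ℚ) ∣ P :=
    (hX1.dvd_or_dvd hd1).resolve_left hnd
  obtain ⟨P', hP'⟩ := hP1
  have hd2' : (X 1 : MvPolynomial (Fin 2) ℚ) ∣ (X 0) ^ 2 * P' := by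
    have : (X 1 : MvPolynomial (Fin 2) ℚ) * X 1 ∣ X 1 * ((X 0) ^ 2 * P') := by
      obtain ⟨c, hc⟩ := hd2
      refine ⟨c, ?_⟩
      rw [hP'] at hc
      linear_combination hc
    exact (mul_dvd_mul_iff_left hX1ne).mp this
  have hPZ : (X 1 : MvPolynomial (Fin 2) ℚ) ∣ P' :=
    (hX1.dvd_or_dvd hd2').resolve_left hnd
  obtain ⟨Z, hZ⟩ := hPZ
  have hP : P = (X 1) ^ 2 * Z := by rw [hP', hZ]; ring
  refine ⟨Z, hP, ?_, ?_⟩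
  · apply mul_left_cancel₀ hsqne
    rw [hP] at h1
    linear_combination h1
  · apply mul_left_cancel₀ hsqne
    rw [hP] at h2'
    linear_combination -h2'
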